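/- Given a closed walk through all vertices of a complete graph with weights satisfying the triangle inequality, there exists a Hamiltonian cycle of weight at most the weight of the walk (obtained by shortcutting repeated vertices). -/

import Mathlib

open scoped Classical

/-- Cyclic weight of a closed tour given by the vertex list `l`:
the sum of `ρ` over consecutive pairs, including the pair closing the cycle. -/
def cycWeight {V : Type*} (ρ : V → V → ℝ) (l : List V) : ℝ :=
  ((l.zip (l.rotate 1)).map fun p => ρ p.1 p.2).sum

/-- The (cyclic) list of edges of a closed tour given by the vertex list `l`. -/
def cycEdges {V : Type*} (l : List V) : List (Sym2 V) :=
  (l.zip (l.rotate 1)).map Sym2.mk.uncurry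

/-- The list of endpoints of a list of matching pairs. -/
def matchVerts {V : Type*} (M : List (V × V)) : List V :=
  M.flatMap fun p => [p.1, p.2]

/-- `M` is a perfect matching on the vertex set `X`: a partition of `X` into pairs. -/
def IsPM {V : Type*} [DecidableEq V] (X : Finset V) (M : List (V × V)) : Prop :=
  (matchVerts M).Nodup ∧ (matchVerts M).toFinset = X

/-- The weight of a matching: the sum of weights of its pairs. -/
def mWeight {V : Type*} (ρ : V → V → ℝ) (M : List (V × V)) : ℝ :=
  (M.map fun p => ρ p.1 p.2).sum

/-- Total edge weight of a graph. -/
noncomputable def gWeight {V : Type*} [Fintype V] (f : Sym2 V → ℝ) (T : SimpleGraph V) : ℝ :=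
  ∑ e ∈ T.edgeSet.toFinset, f e

/-- The weight of a walk in the graph `G` with edge weights `f`
(edges are counted with multiplicity). -/
def walkWeight {V : Type*} (G : SimpleGraph V) (f : Sym2 V → ℝ) {u v : V} (p : G.Walk u v) : ℝ :=
  (p.edges.map f).sum

/-- Shortest-path distance between `i` and `j` (metric closure of `G`). -/
noncomputable def sdist {V : Type*} (G : SimpleGraph V) (f : Sym2 V → ℝ) (i j : V) : ℝ :=
  sInf {x | ∃ p : G.Walk i j, x = walkWeight G f p}

/-!
Write the walk as `a :: t`, i.e. as the path `a, t, a`. Deleting a vertex `x` from the interior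
of a path replaces two edges `u x, x v` by the single edge `u v`, which by the triangle
inequality does not increase the weight. Hence every subsequence of `t`, in particular the one
keeping a single occurrence of each vertex other than `a`, gives a path `a, s, a` of weight
at most that of the walk, and `a :: s` is a Hamiltonian cycle.
-/

section PathWeight

variable {V : Type*} (ρ : V → V → ℝ)

def pathWeight : V → List V → ℝ
  | _, [] => 0
  | i, j :: l => ρ i j + pathWeight j l

variable {ρ}

lemma pathWeight_cons_le_detour (htri : ∀ i j k, ρ i j ≤ ρ i k + ρ k j) (i x y : V)
    (l : List V) : pathWeight ρ i (y :: l) ≤ ρ i x + pathWeight ρ x (y :: l) := by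
  simp only [pathWeight]
  linarith [htri i y x]

lemma List.Sublist.pathWeight_append_singleton_le (htri : ∀ i j k, ρ i j ≤ ρ i k + ρ k j)
    {l m : List V} (h : l.Sublist m) (i z : V) :
    pathWeight ρ i (l ++ [z]) ≤ pathWeight ρ i (m ++ [z]) := by
  induction h generalizing i with
  | slnil => rfl
  | @cons l m x _ ih =>
    obtain ⟨y, r, hyr⟩ := List.exists_cons_of_ne_nil (List.append_ne_nil_of_right_ne_nil m
      (List.cons_ne_nil z []))
    calc pathWeight ρ i (l ++ [z]) ≤ pathWeight ρ i (m ++ [z]) := ih i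
      _ ≤ ρ i x + pathWeight ρ x (m ++ [z]) := by
        rw [hyr]; exact pathWeight_cons_le_detour htri i x y r
  | cons_cons x _ ih =>
    simp only [List.cons_append, pathWeight]
    linarith [ih x]

lemma cycWeight_cons (a : V) (l : List V) : cycWeight ρ (a :: l) = pathWeight ρ a (l ++ [a]) := by
  have zip_eq : ∀ (l : List V) (i : V),
      (((i :: l).zip (l ++ [a])).map fun p => ρ p.1 p.2).sum = pathWeight ρ i (l ++ [a]) := by
    intro l
    induction l with
    | nil => intro i; simp [pathWeight]
    | cons b l ih => intro i; simp [pathWeight, ih b]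
  rw [cycWeight, List.rotate_cons_succ l a 0, List.rotate_zero]
  exact zip_eq l a

end PathWeight

lemma List.toFinset_cons_dedup_filter_ne {V : Type*} [DecidableEq V] (a : V) (t : List V) :
    (a :: (t.filter (· ≠ a)).dedup).toFinset = (a :: t).toFinset := by
  ext x
  by_cases hx : x = a <;> simp [hx]

theorem shortcut_walk_to_ham_general {V : Type*} [Fintype V] [DecidableEq V]
    (ρ : V → V → ℝ)
    (htri : ∀ i j k, ρ i j ≤ ρ i k + ρ k j)
    (w : List V) (hw : w ≠ [])
    (hwspan : w.toFinset = Finset.univ) :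
    ∃ l : List V, l.Sublist w ∧ l.Nodup ∧ l.toFinset = Finset.univ ∧
      cycWeight ρ l ≤ cycWeight ρ w := by
  obtain ⟨a, t, rfl⟩ := List.exists_cons_of_ne_nil hw
  have hsub : (t.filter (· ≠ a)).dedup.Sublist t :=
    (List.dedup_sublist _).trans List.filter_sublist
  refine ⟨a :: (t.filter (· ≠ a)).dedup, hsub.cons_cons a, ?_, ?_, ?_⟩
  · refine (List.nodup_dedup _).cons fun ha => ?_
    simpa using List.of_mem_filter (List.mem_dedup.mp ha)
  · rw [List.toFinset_cons_dedup_filter_ne, hwspan]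
  · rw [cycWeight_cons, cycWeight_cons]
    exact (hsub.pathWeight_append_singleton_le htri) a a

/-- Shortcutting: from a closed walk through all vertices one obtains a
Hamiltonian cycle (a subsequence of the walk) of weight at most that of the walk. -/
theorem shortcut_walk_to_ham {V : Type*} [Fintype V] [DecidableEq V]
    (ρ : V → V → ℝ) (hnn : ∀ i j, 0 ≤ ρ i j) (hsym : ∀ i j, ρ i j = ρ j i)
    (htri : ∀ i j k, ρ i j ≤ ρ i k + ρ k j) (hV : 3 ≤ Fintype.card V)
    (w : List V) (hw : w ≠ []) (hwadj : ∀ p ∈ w.zip (w.rotate 1), p.1 ≠ p.2)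
    (hwspan : w.toFinset = Finset.univ) :
    ∃ l : List V, l.Sublist w ∧ l.Nodup ∧ l.toFinset = Finset.univ ∧
      cycWeight ρ l ≤ cycWeight ρ w :=
  shortcut_walk_to_ham_general ρ htri w hw hwspan
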